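/- Convolution kernel estimate: Let 1/4 < s < 1/2 and c > 0. There exists a constant C = C(s,c) such that for every N ≥ 1, sup_{ξ ∈ ℝ} ∫_{{ξ₁ ∈ ℝ : max(|ξ₁|, |ξ − ξ₁|) ≥ cN}} ⟨ξ₁⟩^{−2s} ⟨ξ − ξ₁⟩^{−2s} dξ₁ ≤ C N^{1 − 4s}. (The analogous bound holds with the integral replaced by a sum over ξ₁ ∈ ℤ.) -/

import Mathlib

set_option maxHeartbeats 1000000


open MeasureTheory Set
open scoped ENNReal

noncomputable section

/-! ### Fourier analysis on the real line (convention `f̂(ξ) = ∫ e^{-ixξ} f(x) dx`) -/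

/-- Spatial Fourier transform on `ℝ`. -/
def FT (f : ℝ → ℂ) (ξ : ℝ) : ℂ := ∫ x : ℝ, Complex.exp (-Complex.I * x * ξ) * f x

/-- Inverse Fourier transform on `ℝ`. -/
def invFT (g : ℝ → ℂ) (x : ℝ) : ℂ :=
  ((1 / (2 * Real.pi) : ℝ) : ℂ) * ∫ ξ : ℝ, Complex.exp (Complex.I * x * ξ) * g ξ

/-- Fourier multiplier operator with symbol `m` on the line. -/
def mult (m : ℝ → ℂ) (f : ℝ → ℂ) : ℝ → ℂ := invFT fun ξ => m ξ * FT f ξ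

/-- `g` is the image of `f` under the Fourier multiplier with symbol `m`. -/
def IsMult (m : ℝ → ℂ) (f g : ℝ → ℂ) : Prop := ∀ ξ : ℝ, FT g ξ = m ξ * FT f ξ

/-- Japanese bracket `⟨ξ⟩ = (1+ξ²)^{1/2}`. -/
def jap (ξ : ℝ) : ℝ := Real.sqrt (1 + ξ ^ 2)

/-- Sobolev `H^s` norm on the line: `‖⟨ξ⟩^s f̂(ξ)‖_{L²_ξ}`. -/
def sobNorm (s : ℝ) (f : ℝ → ℂ) : ℝ≥0∞ :=
  eLpNorm (fun ξ : ℝ => ((jap ξ ^ s : ℝ) : ℂ) * FT f ξ) 2 volume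

/-- Sobolev `H^s` norm of the frequency part cut out by the symbol `m`. -/
def sobNormP (m : ℝ → ℂ) (s : ℝ) (f : ℝ → ℂ) : ℝ≥0∞ :=
  eLpNorm (fun ξ : ℝ => ((jap ξ ^ s : ℝ) : ℂ) * m ξ * FT f ξ) 2 volume

def RealValued (f : ℝ → ℂ) : Prop := ∀ x, (f x).im = 0

/-! ### Symbols -/

/-- hyperbolic cotangent (with Lean-junk value `0` at `x = 0`). -/
def cothR (x : ℝ) : ℝ := Real.cosh x / Real.sinh x

/-- symbol of the Hilbert transform `H`. -/
def hSymb (ξ : ℝ) : ℂ := -Complex.I * (Real.sign ξ : ℝ)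

/-- symbol of `T_δ`. -/
def tSymb (δ ξ : ℝ) : ℂ := -Complex.I * (cothR (δ * ξ) : ℝ)

/-- symbol of `Q_δ = T_δ - H`. -/
def qSymb (δ ξ : ℝ) : ℂ := tSymb δ ξ - hSymb ξ

/-- `coth(δξ) - 1/(δξ)`, the symbol of `G_δ` divided by `-i` (value `0` at `ξ = 0`). -/
def gSymb (δ ξ : ℝ) : ℝ := cothR (δ * ξ) - 1 / (δ * ξ)

/-- propagator `e^{t G_δ ∂_x²}`: symbol `e^{-itξ²(coth(δξ) - 1/(δξ))}`. -/
def ilwProp (δ t ξ : ℝ) : ℂ := Complex.exp (-Complex.I * t * ξ ^ 2 * (gSymb δ ξ : ℝ))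

/-- BO propagator `e^{t H ∂_x²}`: symbol `e^{-itξ|ξ|}`. -/
def boProp (t ξ : ℝ) : ℂ := Complex.exp (-Complex.I * t * ξ * |ξ|)

/-- inverse BO propagator `e^{-t H ∂_x²}`: symbol `e^{itξ|ξ|}`. -/
def boPropInv (t ξ : ℝ) : ℂ := Complex.exp (Complex.I * t * ξ * |ξ|)

/-- Schrödinger propagator `e^{it∂_x²}`: symbol `e^{-itξ²}`. -/
def schrProp (t ξ : ℝ) : ℂ := Complex.exp (-Complex.I * t * ξ ^ 2)

/-- Schrödinger propagator `e^{-it∂_x²}`: symbol `e^{itξ²}`. -/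
def schrPropInv (t ξ : ℝ) : ℂ := Complex.exp (Complex.I * t * ξ ^ 2)

/-- the regularity threshold `s₀ = 3 - √(33/4) ≈ 0.1277`. -/
def sZero : ℝ := 3 - Real.sqrt (33 / 4)

/-! ### Littlewood–Paley cutoffs -/

/-- `ψ : ℝ → [0,1]` smooth, supported in `[-2,2]`, equal to `1` on `[-1,1]`. -/
def IsLPCutoff (ψ : ℝ → ℝ) : Prop :=
  ContDiff ℝ (⊤ : ℕ∞) ψ ∧ (∀ ξ, ψ ξ ∈ Icc (0 : ℝ) 1) ∧
    (∀ ξ, ξ ∉ Icc (-2 : ℝ) 2 → ψ ξ = 0) ∧ ∀ ξ ∈ Icc (-1 : ℝ) 1, ψ ξ = 1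

/-- `ψ₀ ∈ C_c^∞(ℝ)` with `∫ ψ₀ = 1`. -/
def IsUnitBump (ψ₀ : ℝ → ℝ) : Prop :=
  ContDiff ℝ (⊤ : ℕ∞) ψ₀ ∧ HasCompactSupport ψ₀ ∧ (∫ y : ℝ, ψ₀ y) = 1

/-- symbol of `P_{≤N}`. -/
def pleSymb (ψ : ℝ → ℝ) (N ξ : ℝ) : ℂ := ((ψ (ξ / N) : ℝ) : ℂ)

/-- symbol of `P_N = P_{≤N} - P_{≤N/2}`. -/
def pNSymb (ψ : ℝ → ℝ) (N ξ : ℝ) : ℂ := ((ψ (ξ / N) - ψ (2 * ξ / N) : ℝ) : ℂ)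

/-- symbol `χ₊` of `P_{+,hi} = P_+ (1 - P_{≤1})`. -/
def chiPlus (ψ : ℝ → ℝ) (ξ : ℝ) : ℂ :=
  (if 0 < ξ then (1 : ℂ) else 0) * (1 - ((ψ ξ : ℝ) : ℂ))

/-- symbol of `P_- ∂_x`. -/
def pMinusDx (ξ : ℝ) : ℂ := (if ξ < 0 then (1 : ℂ) else 0) * (Complex.I * ξ)

/-- symbol of `∂_x⁻¹`. -/
def invDxSymb (ξ : ℝ) : ℂ := 1 / (Complex.I * ξ)

/-! ### Norms in time -/

/-- `C_T X`-type norm: `sup_{t ∈ [0,T]} ‖v(t)‖_{L^p}`. -/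
def CTnorm (T : ℝ) (p : ℝ≥0∞) (v : ℝ → ℝ → ℂ) : ℝ≥0∞ :=
  ⨆ t ∈ Icc (0 : ℝ) T, eLpNorm (v t) p volume

/-- `sup_{t ∈ [0,T]} ‖v(t)‖_{H^s}`. -/
def CTsob (s T : ℝ) (v : ℝ → ℝ → ℂ) : ℝ≥0∞ :=
  ⨆ t ∈ Icc (0 : ℝ) T, sobNorm s (v t)

/-- supremum over `[0,T]` of an `ℝ≥0∞`-valued quantity. -/
def CTsup (T : ℝ) (g : ℝ → ℝ≥0∞) : ℝ≥0∞ := ⨆ t ∈ Icc (0 : ℝ) T, g t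

/-- mixed norm `L^p([0,T]; L^q(ℝ))`. -/
def mixNorm (T : ℝ) (p q : ℝ≥0∞) (u : ℝ → ℝ → ℂ) : ℝ≥0∞ :=
  if p = ⊤ then ⨆ t ∈ Icc (0 : ℝ) T, eLpNorm (u t) q volume
  else (∫⁻ t in Icc (0 : ℝ) T, eLpNorm (u t) q volume ^ p.toReal) ^ (1 / p.toReal)

/-! ### Solution concepts on the line (Duhamel–Fourier formulation) -/

/-- global solution of ILW `∂_t u - G_δ ∂_x² u = ∂_x(u²)` on the line. -/
def IsILWsolR (δ : ℝ) (u : ℝ → ℝ → ℂ) : Prop :=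
  (∀ t, RealValued (u t)) ∧
    ∀ t ξ : ℝ, FT (u t) ξ = ilwProp δ t ξ * FT (u 0) ξ +
      ∫ t' in (0 : ℝ)..t, ilwProp δ (t - t') ξ * (Complex.I * ξ) * FT (fun x => u t' x ^ 2) ξ

/-- global solution of BO `∂_t u - H ∂_x² u = ∂_x(u²)` on the line. -/
def IsBOsolR (u : ℝ → ℝ → ℂ) : Prop :=
  (∀ t, RealValued (u t)) ∧
    ∀ t ξ : ℝ, FT (u t) ξ = boProp t ξ * FT (u 0) ξ +
      ∫ t' in (0 : ℝ)..t, boProp (t - t') ξ * (Complex.I * ξ) * FT (fun x => u t' x ^ 2) ξ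

/-- solution on `[0,T]` of the renormalized ILW equation
`∂_t v - H ∂_x² v = ∂_x(v²) + Q_δ ∂_x v` on the line. -/
def IsRILW (δ T : ℝ) (v : ℝ → ℝ → ℂ) : Prop :=
  (∀ t, RealValued (v t)) ∧
    ∀ t ∈ Icc (0 : ℝ) T, ∀ ξ : ℝ,
      FT (v t) ξ = boProp t ξ * FT (v 0) ξ +
        ∫ t' in (0 : ℝ)..t, boProp (t - t') ξ *
          (Complex.I * ξ * FT (fun x => v t' x ^ 2) ξ +
            qSymb δ ξ * (Complex.I * ξ) * FT (v t') ξ)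

/-- membership in `C(I; H^s(ℝ))`. -/
def CtsSob (s : ℝ) (I : Set ℝ) (v : ℝ → ℝ → ℂ) : Prop :=
  (∀ t ∈ I, sobNorm s (v t) < ⊤) ∧
    ∀ t₀ ∈ I, ∀ ε : ℝ, 0 < ε → ∃ d : ℝ, 0 < d ∧ ∀ t ∈ I, |t - t₀| < d →
      sobNorm s (fun x => v t x - v t₀ x) < ENNReal.ofReal ε

/-! ### gauge transform on the line -/

/-- the primitive `F = F[v]` of the paper (line case), built from the bump `ψ₀`. -/
def primit (δ : ℝ) (ψ₀ : ℝ → ℝ) (v : ℝ → ℝ → ℂ) (t x : ℝ) : ℂ :=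
  (∫ y : ℝ, ((ψ₀ y : ℝ) : ℂ) * ∫ z in y..x, v t z) +
    ∫ t' in (0 : ℝ)..t, ∫ y : ℝ, ((ψ₀ y : ℝ) : ℂ) *
      (mult (fun ξ => hSymb ξ * (Complex.I * ξ)) (v t') y +
        mult (fun ξ => qSymb δ ξ) (v t') y + v t' y ^ 2)

/-- the gauge transform `w = -i P_{+,hi}(e^{iF} v)` (line case). -/
def gaugeW (δ : ℝ) (ψ ψ₀ : ℝ → ℝ) (v : ℝ → ℝ → ℂ) (t x : ℝ) : ℂ :=
  -Complex.I *
    mult (chiPlus ψ) (fun y => Complex.exp (Complex.I * primit δ ψ₀ v t y) * v t y) x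

/-! ### error terms -/

/-- `E₂(f,g) = i ∂_x P_{+,hi}[f · Q_δ g]` (line case). -/
def E2op (δ : ℝ) (ψ : ℝ → ℝ) (f g : ℝ → ℂ) (x : ℝ) : ℂ :=
  Complex.I * mult (fun ξ => Complex.I * ξ * chiPlus ψ ξ)
    (fun y => f y * mult (fun ξ => qSymb δ ξ) g y) x

/-- `P_hi(e^{iF}) := ∂_x⁻¹ P_hi(∂_x e^{iF})`, where `∂_x F = f`. -/
def pHiExp (ψ : ℝ → ℝ) (F f : ℝ → ℝ) : ℝ → ℂ :=
  mult (fun ξ => (1 - ((ψ ξ : ℝ) : ℂ)) * invDxSymb ξ)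
    (fun x => Complex.I * (f x : ℂ) * Complex.exp (Complex.I * (F x : ℂ)))

/-- `P_lo(e^{iF}) := e^{iF} - P_hi(e^{iF})`. -/
def pLoExp (ψ : ℝ → ℝ) (F f : ℝ → ℝ) (x : ℝ) : ℂ :=
  Complex.exp (Complex.I * (F x : ℂ)) - pHiExp ψ F f x

/-- `E₁(e^{iF}, g) = -2 ∂_x P_{+,hi}[(P_lo e^{iF})(P_- ∂_x g)]` (line case). -/
def E1expR (ψ : ℝ → ℝ) (F f : ℝ → ℝ) (g : ℝ → ℂ) (x : ℝ) : ℂ :=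
  -2 * mult (fun ξ => Complex.I * ξ * chiPlus ψ ξ)
    (fun y => pLoExp ψ F f y * mult pMinusDx g y) x

/-! ### The circle `𝕋 = ℝ/2πℤ`, modelled by `2π`-periodic functions on `ℝ` -/

/-- `f` is `2π`-periodic. -/
def Per (f : ℝ → ℂ) : Prop := Function.Periodic f (2 * Real.pi)

def PerR (F : ℝ → ℝ) : Prop := Function.Periodic F (2 * Real.pi)

/-- Fourier coefficient on the circle: `f̂(n) = ∫_0^{2π} e^{-inx} f(x) dx`. -/
def FTc (f : ℝ → ℂ) (n : ℤ) : ℂ :=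
  ∫ x in (0 : ℝ)..(2 * Real.pi), Complex.exp (-Complex.I * (n : ℂ) * (x : ℂ)) * f x

/-- Fourier multiplier with symbol `m` on the circle. -/
def multT (m : ℤ → ℂ) (f : ℝ → ℂ) (x : ℝ) : ℂ :=
  ((1 / (2 * Real.pi) : ℝ) : ℂ) *
    ∑' n : ℤ, m n * FTc f n * Complex.exp (Complex.I * (n : ℂ) * (x : ℂ))

def IsMultT (m : ℤ → ℂ) (f g : ℝ → ℂ) : Prop := ∀ n : ℤ, FTc g n = m n * FTc f n

/-- Sobolev `H^s` norm on the circle. -/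
def sobNormT (s : ℝ) (f : ℝ → ℂ) : ℝ≥0∞ :=
  eLpNorm (fun n : ℤ => ((jap (n : ℝ) ^ s : ℝ) : ℂ) * FTc f n) 2 Measure.count

/-- Sobolev `H^s` norm of the frequency part cut out by `m`, circle case. -/
def sobNormTP (m : ℤ → ℂ) (s : ℝ) (f : ℝ → ℂ) : ℝ≥0∞ :=
  eLpNorm (fun n : ℤ => ((jap (n : ℝ) ^ s : ℝ) : ℂ) * m n * FTc f n) 2 Measure.count

/-- `L^q` norm on the circle. -/
def eLpNormT (q : ℝ≥0∞) (f : ℝ → ℂ) : ℝ≥0∞ :=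
  eLpNorm f q (volume.restrict (Ioc (0 : ℝ) (2 * Real.pi)))

def eLpNormTR (q : ℝ≥0∞) (f : ℝ → ℝ) : ℝ≥0∞ :=
  eLpNorm f q (volume.restrict (Ioc (0 : ℝ) (2 * Real.pi)))

/-- global solution of ILW on the circle. -/
def IsILWsolT (δ : ℝ) (u : ℝ → ℝ → ℂ) : Prop :=
  (∀ t, Per (u t)) ∧ (∀ t, RealValued (u t)) ∧
    ∀ (t : ℝ) (n : ℤ), FTc (u t) n = ilwProp δ t (n : ℝ) * FTc (u 0) n +
      ∫ t' in (0 : ℝ)..t, ilwProp δ (t - t') (n : ℝ) * (Complex.I * (n : ℂ)) *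
        FTc (fun x => u t' x ^ 2) n

/-- global solution of BO on the circle. -/
def IsBOsolT (u : ℝ → ℝ → ℂ) : Prop :=
  (∀ t, Per (u t)) ∧ (∀ t, RealValued (u t)) ∧
    ∀ (t : ℝ) (n : ℤ), FTc (u t) n = boProp t (n : ℝ) * FTc (u 0) n +
      ∫ t' in (0 : ℝ)..t, boProp (t - t') (n : ℝ) * (Complex.I * (n : ℂ)) *
        FTc (fun x => u t' x ^ 2) n

/-- membership in `C(I; H^s(𝕋))`. -/
def CtsSobT (s : ℝ) (I : Set ℝ) (v : ℝ → ℝ → ℂ) : Prop :=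
  (∀ t ∈ I, sobNormT s (v t) < ⊤) ∧
    ∀ t₀ ∈ I, ∀ ε : ℝ, 0 < ε → ∃ d : ℝ, 0 < d ∧ ∀ t ∈ I, |t - t₀| < d →
      sobNormT s (fun x => v t x - v t₀ x) < ENNReal.ofReal ε

def CTsobT (s T : ℝ) (v : ℝ → ℝ → ℂ) : ℝ≥0∞ :=
  ⨆ t ∈ Icc (0 : ℝ) T, sobNormT s (v t)

lemma jap_pos (x : ℝ) : 0 < jap x := Real.sqrt_pos.2 (by positivity)

lemma one_le_jap (x : ℝ) : 1 ≤ jap x := by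
  have h : Real.sqrt 1 ≤ Real.sqrt (1 + x ^ 2) := Real.sqrt_le_sqrt (by nlinarith [sq_nonneg x])
  rwa [Real.sqrt_one] at h

lemma abs_le_jap (x : ℝ) : |x| ≤ jap x := by
  have h : Real.sqrt (x ^ 2) ≤ Real.sqrt (1 + x ^ 2) := Real.sqrt_le_sqrt (by nlinarith)
  simpa [Real.sqrt_sq_eq_abs, jap] using h

lemma jap_le_jap {a b : ℝ} (h : |a| ≤ |b|) : jap a ≤ jap b := by
  have h2 : a ^ 2 ≤ b ^ 2 := by
    have := sq_abs a; have := sq_abs b; nlinarith [abs_nonneg a]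
  exact Real.sqrt_le_sqrt (by linarith)

lemma japr_nonneg (q x : ℝ) : 0 ≤ jap x ^ (-q) := Real.rpow_nonneg (jap_pos x).le _

lemma japr_le_one {q : ℝ} (hq : 0 ≤ q) (x : ℝ) : jap x ^ (-q) ≤ 1 :=
  Real.rpow_le_one_of_one_le_of_nonpos (one_le_jap x) (neg_nonpos.2 hq)

lemma japr_le_abs {q : ℝ} (hq : 0 ≤ q) {x : ℝ} (hx : x ≠ 0) : jap x ^ (-q) ≤ |x| ^ (-q) :=
  Real.rpow_le_rpow_of_nonpos (abs_pos.2 hx) (abs_le_jap x) (neg_nonpos.2 hq)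

lemma japr_le_const {q R : ℝ} (hq : 0 ≤ q) (hR : 0 < R) {x : ℝ} (h : R ≤ |x|) :
    jap x ^ (-q) ≤ R ^ (-q) :=
  Real.rpow_le_rpow_of_nonpos hR (h.trans (abs_le_jap x)) (neg_nonpos.2 hq)

lemma japr_anti {q : ℝ} (hq : 0 ≤ q) {a b : ℝ} (h : |a| ≤ |b|) :
    jap b ^ (-q) ≤ jap a ^ (-q) :=
  Real.rpow_le_rpow_of_nonpos (jap_pos a) (jap_le_jap h) (neg_nonpos.2 hq)

lemma continuous_japr (q : ℝ) : Continuous fun x : ℝ => jap x ^ (-q) := by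
  have hjap : Continuous jap := Real.continuous_sqrt.comp (by continuity)
  exact hjap.rpow_const fun x => Or.inl (jap_pos x).ne'

lemma my_integrable_comp_abs {f : ℝ → ℝ} (hf : IntegrableOn f (Ioi 0)) :
    Integrable fun x : ℝ => f |x| := by
  have h1 : IntegrableOn (fun x => f |x|) (Ioi 0) :=
    hf.congr_fun (fun x hx => by rw [abs_of_pos hx]) measurableSet_Ioi
  have h2 : IntegrableOn (fun x => f |x|) (Iic 0) := by
    rw [← Measure.map_neg_eq_self (volume : Measure ℝ)]
    have m : MeasurableEmbedding fun x : ℝ => -x := (Homeomorph.neg ℝ).measurableEmbedding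
    rw [m.integrableOn_map_iff]
    simp_rw [Function.comp_def, abs_neg, neg_preimage, neg_Iic, neg_zero]
    exact Iff.mpr integrableOn_Ici_iff_integrableOn_Ioi h1
  rw [← integrableOn_univ, ← Iic_union_Ioi (a := (0 : ℝ))]
  exact h2.union h1

lemma tail_piece {q R : ℝ} (hq : 1 < q) (hR : 0 < R) :
    Integrable (fun x : ℝ => (Ici R).indicator (fun t => t ^ (-q)) |x|) ∧
    ∫ x : ℝ, (Ici R).indicator (fun t => t ^ (-q)) |x| = 2 * (R ^ (1 - q) / (q - 1)) := by
  have hbase : IntegrableOn (fun t : ℝ => t ^ (-q)) (Ici R) :=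
    Iff.mpr integrableOn_Ici_iff_integrableOn_Ioi (integrableOn_Ioi_rpow_of_lt (by linarith) hR)
  have hsub : Ici R ⊆ Ioi 0 := fun x hx => lt_of_lt_of_le hR hx
  have hIoi : IntegrableOn (fun x : ℝ => (Ici R).indicator (fun t => t ^ (-q)) x) (Ioi 0) := by
    rw [IntegrableOn, integrable_indicator_iff measurableSet_Ici, IntegrableOn,
      Measure.restrict_restrict measurableSet_Ici, inter_eq_left.mpr hsub]
    exact hbase
  refine ⟨my_integrable_comp_abs hIoi, ?_⟩
  rw [integral_comp_abs, setIntegral_indicator measurableSet_Ici,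
    inter_eq_right.mpr hsub,
    integral_Ici_eq_integral_Ioi, integral_Ioi_rpow_of_lt (by linarith) hR]
  have h1 : (1 : ℝ) - q ≠ 0 := by intro h; apply absurd hq; intro _; linarith
  have h2 : (q : ℝ) - 1 ≠ 0 := by intro h; apply absurd hq; intro _; linarith
  rw [show -q + 1 = 1 - q by ring]
  field_simp
  ring

lemma head_piece {q R : ℝ} (hq0 : 0 < q) (hq1 : q < 1) (hR : 0 < R) :
    Integrable (fun x : ℝ => (Iio R).indicator (fun t => t ^ (-q)) |x|) ∧
    ∫ x : ℝ, (Iio R).indicator (fun t => t ^ (-q)) |x| = 2 * (R ^ (1 - q) / (1 - q)) := by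
  have hbase : IntegrableOn (fun t : ℝ => t ^ (-q)) (Ioo 0 R) := by
    have := (intervalIntegrable_iff_integrableOn_Ioc_of_le hR.le).mp
      (intervalIntegral.intervalIntegrable_rpow' (r := -q) (by linarith) (a := 0) (b := R))
    exact this.mono_set Ioo_subset_Ioc_self
  have hIoi : IntegrableOn (fun x : ℝ => (Iio R).indicator (fun t => t ^ (-q)) x) (Ioi 0) := by
    rw [IntegrableOn, integrable_indicator_iff measurableSet_Iio, IntegrableOn,
      Measure.restrict_restrict measurableSet_Iio, Set.Iio_inter_Ioi]
    exact hbase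
  refine ⟨my_integrable_comp_abs hIoi, ?_⟩
  rw [integral_comp_abs, setIntegral_indicator measurableSet_Iio, Set.Ioi_inter_Iio,
    ← integral_Ioc_eq_integral_Ioo, ← intervalIntegral.integral_of_le hR.le,
    _root_.integral_rpow (Or.inl (by linarith : (-1 : ℝ) < -q))]
  rw [Real.zero_rpow (by linarith : -q + 1 ≠ 0), show -q + 1 = 1 - q by ring]
  ring

lemma cont_part {s c : ℝ} (hs₁ : 1 / 4 < s) (hs₂ : s < 1 / 2) (hc : 0 < c)
    {N : ℝ} (hN : 1 ≤ N) (ξ : ℝ) :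
    (∫ ξ₁ in {ξ₁ : ℝ | c * N ≤ max |ξ₁| |ξ - ξ₁|},
      jap ξ₁ ^ (-(2 * s)) * jap (ξ - ξ₁) ^ (-(2 * s))) ≤
      ((4 / (4 * s - 1) + 4 / (1 - 2 * s)) * c ^ (1 - 4 * s)) * N ^ (1 - 4 * s) := by
  have hs4 : 1 < 4 * s := by linarith
  have hs2 : 2 * s < 1 := by linarith
  have hs2p : 0 < 2 * s := by linarith
  have hN0 : 0 < N := lt_of_lt_of_le zero_lt_one hN
  set R := c * N with hRdef
  have hR : 0 < R := mul_pos hc hN0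
  obtain ⟨hG1int, hG1val⟩ := tail_piece (q := 4 * s) hs4 hR
  obtain ⟨hHint, hHval⟩ := head_piece (q := 2 * s) hs2p hs2 hR
  set f : ℝ → ℝ := fun x => jap x ^ (-(2 * s)) * jap (ξ - x) ^ (-(2 * s)) with hfdef
  set g1 : ℝ → ℝ := fun x => (Ici R).indicator (fun t => t ^ (-(4 * s))) |x| with hg1def
  set g3 : ℝ → ℝ := fun x => R ^ (-(2 * s)) * (Iio R).indicator (fun t => t ^ (-(2 * s))) |x|
    with hg3def
  have hg3int : Integrable g3 := hHint.const_mul _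
  have hG2int : Integrable (fun x => g1 (ξ - x)) := (integrable_comp_sub_left g1 ξ).mpr hG1int
  have hG4int : Integrable (fun x => g3 (ξ - x)) := (integrable_comp_sub_left g3 ξ).mpr hg3int
  have hsum_int : Integrable (fun x => g1 x + g1 (ξ - x) + g3 x + g3 (ξ - x)) :=
    ((hG1int.add hG2int).add hg3int).add hG4int
  have hg1_nonneg : ∀ y : ℝ, 0 ≤ g1 y := fun y =>
    Set.indicator_apply_nonneg fun ht => Real.rpow_nonneg (abs_nonneg y) _
  have hg3_nonneg : ∀ y : ℝ, 0 ≤ g3 y := fun y =>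
    mul_nonneg (Real.rpow_nonneg hR.le _)
      (Set.indicator_apply_nonneg fun ht => Real.rpow_nonneg (abs_nonneg y) _)
  have hf_nonneg : ∀ y : ℝ, 0 ≤ f y := fun y =>
    mul_nonneg (japr_nonneg _ _) (japr_nonneg _ _)
  set S : Set ℝ := {x | R ≤ max |x| |ξ - x|} with hSdef
  have hSm : MeasurableSet S := by
    have hcont : Continuous fun x : ℝ => max |x| |ξ - x| :=
      continuous_abs.max ((continuous_const.sub continuous_id).abs)
    exact measurableSet_le measurable_const hcont.measurable
  have hf_cont : Continuous f := (continuous_japr (2 * s)).mul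
    ((continuous_japr (2 * s)).comp (continuous_const.sub continuous_id))
  have hfm : AEStronglyMeasurable (S.indicator f) volume :=
    (hf_cont.measurable.indicator hSm).aestronglyMeasurable
  have hpair : volume ({0, ξ} : Set ℝ) = 0 := (Set.toFinite _).measure_zero volume
  have key : ∀ᵐ x : ℝ ∂volume,
      S.indicator f x ≤ g1 x + g1 (ξ - x) + g3 x + g3 (ξ - x) := by
    filter_upwards [compl_mem_ae_iff.mpr hpair] with x hx
    have hx0 : x ≠ 0 := by intro h; exact hx (by simp [h])
    have hxξ : ξ - x ≠ 0 := by intro h; exact hx (by simp [show x = ξ by linarith [sub_eq_zero.mp h]])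
    by_cases hxS : x ∈ S
    · rw [Set.indicator_of_mem hxS]
      have hmax : R ≤ max |x| |ξ - x| := hxS
      rcases le_total |x| |ξ - x| with hle | hle
      · have hR2 : R ≤ |ξ - x| := hmax.trans_eq (max_eq_right hle)
        by_cases hcase : R ≤ |x|
        · have h1 : f x ≤ jap x ^ (-(4 * s)) := by
            have h2 : jap (ξ - x) ^ (-(2 * s)) ≤ jap x ^ (-(2 * s)) := japr_anti (by linarith) hle
            have h3 : jap x ^ (-(2 * s)) * jap x ^ (-(2 * s)) = jap x ^ (-(4 * s)) := by
              rw [← Real.rpow_add (jap_pos x)]; congr 1; ring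
            calc f x ≤ jap x ^ (-(2 * s)) * jap x ^ (-(2 * s)) :=
                  mul_le_mul_of_nonneg_left h2 (japr_nonneg _ _)
              _ = jap x ^ (-(4 * s)) := h3
          have h4 : jap x ^ (-(4 * s)) ≤ g1 x := by
            rw [hg1def]; simp only []
            rw [Set.indicator_of_mem (Set.mem_Ici.mpr hcase)]
            exact japr_le_abs (by linarith) hx0
          linarith [hg1_nonneg (ξ - x), hg3_nonneg x, hg3_nonneg (ξ - x)]
        · push_neg at hcase
          have h1 : f x ≤ g3 x := by
            have h2 : jap (ξ - x) ^ (-(2 * s)) ≤ R ^ (-(2 * s)) :=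
              japr_le_const (by linarith) hR hR2
            have h3 : jap x ^ (-(2 * s)) ≤ |x| ^ (-(2 * s)) := japr_le_abs (by linarith) hx0
            have h4 : g3 x = R ^ (-(2 * s)) * |x| ^ (-(2 * s)) := by
              rw [hg3def]; simp only []
              rw [Set.indicator_of_mem (Set.mem_Iio.mpr hcase)]
            rw [h4]
            calc f x ≤ jap x ^ (-(2 * s)) * R ^ (-(2 * s)) :=
                  mul_le_mul_of_nonneg_left h2 (japr_nonneg _ _)
              _ = R ^ (-(2 * s)) * jap x ^ (-(2 * s)) := mul_comm _ _
              _ ≤ R ^ (-(2 * s)) * |x| ^ (-(2 * s)) :=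
                  mul_le_mul_of_nonneg_left h3 (Real.rpow_nonneg hR.le _)
          linarith [hg1_nonneg x, hg1_nonneg (ξ - x), hg3_nonneg (ξ - x)]
      · have hR2 : R ≤ |x| := hmax.trans_eq (max_eq_left hle)
        by_cases hcase : R ≤ |ξ - x|
        · have h1 : f x ≤ jap (ξ - x) ^ (-(4 * s)) := by
            have h2 : jap x ^ (-(2 * s)) ≤ jap (ξ - x) ^ (-(2 * s)) := japr_anti (by linarith) hle
            have h3 : jap (ξ - x) ^ (-(2 * s)) * jap (ξ - x) ^ (-(2 * s))
                = jap (ξ - x) ^ (-(4 * s)) := by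
              rw [← Real.rpow_add (jap_pos _)]; congr 1; ring
            calc f x ≤ jap (ξ - x) ^ (-(2 * s)) * jap (ξ - x) ^ (-(2 * s)) :=
                  mul_le_mul_of_nonneg_right h2 (japr_nonneg _ _)
              _ = jap (ξ - x) ^ (-(4 * s)) := h3
          have h4 : jap (ξ - x) ^ (-(4 * s)) ≤ g1 (ξ - x) := by
            rw [hg1def]; simp only []
            rw [Set.indicator_of_mem (Set.mem_Ici.mpr hcase)]
            exact japr_le_abs (by linarith) hxξ
          linarith [hg1_nonneg x, hg3_nonneg x, hg3_nonneg (ξ - x)]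
        · push_neg at hcase
          have h1 : f x ≤ g3 (ξ - x) := by
            have h2 : jap x ^ (-(2 * s)) ≤ R ^ (-(2 * s)) := japr_le_const (by linarith) hR hR2
            have h3 : jap (ξ - x) ^ (-(2 * s)) ≤ |ξ - x| ^ (-(2 * s)) :=
              japr_le_abs (by linarith) hxξ
            have h4 : g3 (ξ - x) = R ^ (-(2 * s)) * |ξ - x| ^ (-(2 * s)) := by
              rw [hg3def]; simp only []
              rw [Set.indicator_of_mem (Set.mem_Iio.mpr hcase)]
            rw [h4]
            calc f x ≤ R ^ (-(2 * s)) * jap (ξ - x) ^ (-(2 * s)) :=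
                  mul_le_mul_of_nonneg_right h2 (japr_nonneg _ _)
              _ ≤ R ^ (-(2 * s)) * |ξ - x| ^ (-(2 * s)) :=
                  mul_le_mul_of_nonneg_left h3 (Real.rpow_nonneg hR.le _)
          linarith [hg1_nonneg x, hg1_nonneg (ξ - x), hg3_nonneg x]
    · rw [Set.indicator_of_notMem hxS]
      have := hg1_nonneg x; have := hg1_nonneg (ξ - x)
      have := hg3_nonneg x; have := hg3_nonneg (ξ - x)
      linarith
  have hint : Integrable (S.indicator f) := by
    refine hsum_int.mono' hfm ?_
    filter_upwards [key] with x hx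
    rw [Real.norm_eq_abs, abs_of_nonneg (Set.indicator_apply_nonneg fun _ => hf_nonneg x)]
    exact hx
  have hmul : R ^ (-(2 * s)) * R ^ (1 - 2 * s) = R ^ (1 - 4 * s) := by
    rw [← Real.rpow_add hR]; congr 1; ring
  have hRN : R ^ (1 - 4 * s) = c ^ (1 - 4 * s) * N ^ (1 - 4 * s) := Real.mul_rpow hc.le hN0.le
  calc (∫ x in S, f x) = ∫ x, S.indicator f x := (integral_indicator hSm).symm
    _ ≤ ∫ x, (g1 x + g1 (ξ - x) + g3 x + g3 (ξ - x)) := integral_mono_ae hint hsum_int key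
    _ = (∫ x, (g1 x + g1 (ξ - x) + g3 x)) + (∫ x, g3 (ξ - x)) := by
        have hA2 : Integrable (fun x => g1 x + g1 (ξ - x) + g3 x) volume := by
          exact (hG1int.add hG2int).add hg3int
        exact integral_add hA2 hG4int
    _ = ((∫ x, (g1 x + g1 (ξ - x))) + (∫ x, g3 x)) + (∫ x, g3 (ξ - x)) := by
        have hA1 : Integrable (fun x => g1 x + g1 (ξ - x)) volume := by
          exact hG1int.add hG2int
        exact congrArg (fun t => t + (∫ x, g3 (ξ - x))) (integral_add hA1 hg3int)
    _ = (((∫ x, g1 x) + (∫ x, g1 (ξ - x))) + (∫ x, g3 x)) + (∫ x, g3 (ξ - x)) := by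
        exact congrArg (fun t => t + (∫ x, g3 x) + (∫ x, g3 (ξ - x)))
          (integral_add hG1int hG2int)
    _ = 2 * (∫ x, g1 x) + 2 * (∫ x, g3 x) := by
        rw [integral_sub_left_eq_self g1 volume ξ, integral_sub_left_eq_self g3 volume ξ]; ring
    _ = 4 * (R ^ (1 - 4 * s)) / (4 * s - 1)
        + 4 * (R ^ (-(2 * s)) * R ^ (1 - 2 * s)) / (1 - 2 * s) := by
        have hg3val : (∫ x, g3 x) = R ^ (-(2 * s)) * (2 * (R ^ (1 - 2 * s) / (1 - 2 * s))) := by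
          simp only [hg3def]
          rw [integral_const_mul, hHval]
        rw [hG1val, hg3val]
        ring
    _ = ((4 / (4 * s - 1) + 4 / (1 - 2 * s)) * c ^ (1 - 4 * s)) * N ^ (1 - 4 * s) := by
        rw [hmul, hRN]; ring

lemma jap_neg (x : ℝ) : jap (-x) = jap x := by rw [jap, jap, neg_pow]; ring_nf

lemma int_tail_integral {q : ℝ} (hq : 1 < q) {M : ℝ} (hM : 1 ≤ M) (L : ℕ) :
    (∫ x in M..(M + L), x ^ (-q)) ≤ M ^ (1 - q) / (q - 1) := by
  have hM0 : (0 : ℝ) < M := by linarith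
  have hle : M ≤ M + L := le_add_of_nonneg_right (Nat.cast_nonneg L)
  rw [intervalIntegral.integral_of_le hle]
  have hmono : (∫ x in Ioc M (M + (L : ℝ)), x ^ (-q)) ≤ ∫ x in Ioi M, x ^ (-q) := by
    apply setIntegral_mono_set (integrableOn_Ioi_rpow_of_lt (by linarith) hM0)
    · exact (ae_restrict_iff' measurableSet_Ioi).2 (Filter.Eventually.of_forall
        fun x hx => Real.rpow_nonneg (le_of_lt (lt_trans hM0 hx)) _)
    · exact HasSubset.Subset.eventuallyLE Ioc_subset_Ioi_self
  refine hmono.trans ?_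
  rw [integral_Ioi_rpow_of_lt (by linarith) hM0]
  rw [show -q + 1 = 1 - q by ring, show (1 - q : ℝ) = -(q - 1) by ring, div_neg, neg_div, neg_neg]

lemma nat_tail_partial {q : ℝ} (hq : 1 < q) {M : ℕ} (hM : 1 ≤ M) (K : ℕ) :
    (∑ i ∈ Finset.range K, (if M ≤ i + 1 then ((i + 1 : ℕ) : ℝ) ^ (-q) else 0))
      ≤ (M : ℝ) ^ (-q) + (M : ℝ) ^ (1 - q) / (q - 1) := by
  have hM0 : (0 : ℝ) < M := by exact_mod_cast hM
  have step : ∀ i : ℕ, (if M ≤ i + 1 then ((i + 1 : ℕ) : ℝ) ^ (-q) else 0)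
      ≤ (if i = M - 1 then (M : ℝ) ^ (-q) else 0)
        + (if M ≤ i then ((i + 1 : ℕ) : ℝ) ^ (-q) else 0) := by
    intro i
    by_cases h1 : M ≤ i + 1
    · rw [if_pos h1]
      by_cases h2 : i + 1 = M
      · rw [if_pos (by omega), if_neg (by omega), h2]
        simp
      · rw [if_neg (by omega), if_pos (by omega), zero_add]
    · rw [if_neg h1, if_neg (by omega), if_neg (by omega)]
      simp
  refine (Finset.sum_le_sum fun i _ => step i).trans ?_
  rw [Finset.sum_add_distrib]
  have hA : (∑ i ∈ Finset.range K, (if i = M - 1 then (M : ℝ) ^ (-q) else 0)) ≤ (M : ℝ) ^ (-q) := by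
    rw [Finset.sum_ite_eq' (Finset.range K) (M - 1) (fun _ => (M : ℝ) ^ (-q))]
    split
    · exact le_refl _
    · exact Real.rpow_nonneg hM0.le _
  have hB : (∑ i ∈ Finset.range K, (if M ≤ i then ((i + 1 : ℕ) : ℝ) ^ (-q) else 0))
      ≤ (M : ℝ) ^ (1 - q) / (q - 1) := by
    rw [← Finset.sum_filter]
    have hfil : (Finset.range K).filter (fun i => M ≤ i) = Finset.Ico M K := by
      ext i; simp [Finset.mem_filter, Finset.mem_Ico, Finset.mem_range]; omega
    rw [hfil, Finset.sum_Ico_eq_sum_range]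
    have hanti : AntitoneOn (fun x : ℝ => x ^ (-q)) (Icc (M : ℝ) ((M : ℝ) + (K - M : ℕ))) := by
      intro x hx y hy hxy
      exact Real.rpow_le_rpow_of_nonpos (lt_of_lt_of_le hM0 hx.1) hxy (by linarith)
    have hsum := hanti.sum_le_integral
    have heq : (∑ i ∈ Finset.range (K - M), ((M + i + 1 : ℕ) : ℝ) ^ (-q))
        = ∑ i ∈ Finset.range (K - M), (fun x : ℝ => x ^ (-q)) ((M : ℝ) + ((i + 1 : ℕ) : ℝ)) := by
      apply Finset.sum_congr rfl
      intro i _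
      congr 1
      push_cast
      ring
    rw [heq]
    exact hsum.trans (int_tail_integral hq (by exact_mod_cast hM) (K - M))
  linarith

lemma disc_tail {q R : ℝ} (hq : 1 < q) (hR : 0 < R) :
    Summable (fun m : ℤ => if R ≤ |(m : ℝ)| then jap (m : ℝ) ^ (-q) else 0) ∧
    (∑' m : ℤ, (if R ≤ |(m : ℝ)| then jap (m : ℝ) ^ (-q) else 0))
      ≤ (2 * (1 + 1 / (q - 1))) * R ^ (1 - q) := by
  set F : ℤ → ℝ := fun m => if R ≤ |(m : ℝ)| then jap (m : ℝ) ^ (-q) else 0 with hFdef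
  have hFnn : ∀ m : ℤ, 0 ≤ F m := by
    intro m; rw [hFdef]; dsimp only; split
    · exact japr_nonneg _ _
    · exact le_refl _
  have hFW : ∀ m : ℤ, F m ≤ |(m : ℝ)| ^ (-q) := by
    intro m; rw [hFdef]; dsimp only; split
    · rename_i h
      have hm0 : (m : ℝ) ≠ 0 := by
        intro h0; rw [h0] at h; simp at h; linarith
      exact japr_le_abs (by linarith) hm0
    · exact Real.rpow_nonneg (abs_nonneg _) _
  have hW : Summable fun m : ℤ => |(m : ℝ)| ^ (-q) := Real.summable_abs_int_rpow hq
  have hF : Summable F := Summable.of_nonneg_of_le hFnn hFW hW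
  refine ⟨hF, ?_⟩
  set w : ℕ → ℝ := fun n => if R ≤ (n : ℝ) then jap (n : ℝ) ^ (-q) else 0 with hwdef
  have h₁ : ∀ n : ℕ, F (n : ℤ) = w n := by
    intro n; rw [hFdef, hwdef]; dsimp only
    rw [show ((n : ℤ) : ℝ) = (n : ℝ) by push_cast; ring, abs_of_nonneg (Nat.cast_nonneg n)]
  have h₂ : ∀ n : ℕ, F (-(n + 1) : ℤ) = w (n + 1) := by
    intro n; rw [hFdef, hwdef]; dsimp only
    rw [show ((-(n + 1) : ℤ) : ℝ) = -((n + 1 : ℕ) : ℝ) by push_cast; ring, abs_neg, jap_neg,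
      abs_of_nonneg (Nat.cast_nonneg (n + 1))]
  have hS1 : Summable fun n : ℕ => F (n : ℤ) :=
    hF.comp_injective (fun a b h => by omega)
  have hS2 : Summable fun n : ℕ => F (-(n + 1) : ℤ) :=
    hF.comp_injective (fun a b h => by omega)
  have hw : Summable w := hS1.congr h₁
  have hdec := tsum_of_nat_of_neg_add_one hS1 hS2
  rw [tsum_congr h₁, tsum_congr h₂] at hdec
  have hzero : (∑' n : ℕ, w n) = ∑' n : ℕ, w (n + 1) := by
    rw [Summable.tsum_eq_zero_add hw]
    have : w 0 = 0 := by rw [hwdef]; simp; intro h; linarith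
    rw [this, zero_add]
  set M : ℕ := ⌈R⌉₊ with hMdef
  have hM1 : 1 ≤ M := Nat.ceil_pos.mpr hR
  have hMR : R ≤ (M : ℝ) := Nat.le_ceil R
  have hM0 : (0 : ℝ) < M := by exact_mod_cast hM1
  have hwv : ∀ n : ℕ, w (n + 1) ≤ (if M ≤ n + 1 then ((n + 1 : ℕ) : ℝ) ^ (-q) else 0) := by
    intro n
    rw [hwdef]; dsimp only
    have hcond : (R ≤ ((n + 1 : ℕ) : ℝ)) ↔ (M ≤ n + 1) := (Nat.ceil_le).symm
    by_cases h : M ≤ n + 1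
    · rw [if_pos (hcond.mpr h), if_pos h]
      refine (japr_le_abs (by linarith) (by positivity)).trans ?_
      rw [abs_of_nonneg (Nat.cast_nonneg _)]
    · rw [if_neg (fun hh => h (hcond.mp hh)), if_neg h]
  have htail : (∑' n : ℕ, w (n + 1)) ≤ (M : ℝ) ^ (-q) + (M : ℝ) ^ (1 - q) / (q - 1) := by
    apply Real.tsum_le_of_sum_range_le (fun n => by
      rw [hwdef]; dsimp only; split
      · exact japr_nonneg _ _
      · exact le_refl _)
    intro K
    exact (Finset.sum_le_sum fun i _ => hwv i).trans (nat_tail_partial hq hM1 K)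
  have hMq : (M : ℝ) ^ (-q) ≤ (M : ℝ) ^ (1 - q) :=
    Real.rpow_le_rpow_of_exponent_le (by exact_mod_cast hM1) (by linarith)
  have hM1q : (M : ℝ) ^ (1 - q) ≤ R ^ (1 - q) :=
    Real.rpow_le_rpow_of_nonpos hR hMR (by linarith)
  have hq1 : (0 : ℝ) < q - 1 := by linarith
  have hdivle : (M : ℝ) ^ (1 - q) / (q - 1) ≤ R ^ (1 - q) / (q - 1) :=
    (div_le_div_iff_of_pos_right hq1).mpr hM1q
  calc (∑' m : ℤ, F m) = (∑' n : ℕ, w n) + ∑' n : ℕ, w (n + 1) := hdec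
    _ = 2 * ∑' n : ℕ, w (n + 1) := by rw [hzero]; ring
    _ ≤ 2 * ((M : ℝ) ^ (-q) + (M : ℝ) ^ (1 - q) / (q - 1)) := by linarith
    _ ≤ 2 * (R ^ (1 - q) + R ^ (1 - q) / (q - 1)) := by linarith
    _ = (2 * (1 + 1 / (q - 1))) * R ^ (1 - q) := by ring

lemma nat_head_partial {q R : ℝ} (hq0 : 0 < q) (hq1 : q < 1) (hR : 0 < R) (K : ℕ) :
    (∑ i ∈ Finset.range K,
        (if ((i + 1 : ℕ) : ℝ) < R then jap ((i + 1 : ℕ) : ℝ) ^ (-q) else 0))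
      ≤ 1 + (R + 2) ^ (1 - q) / (1 - q) := by
  set Kc : ℕ := ⌈R⌉₊ with hKc
  have hKcR : R ≤ (Kc : ℝ) := Nat.le_ceil R
  have hKc2 : (Kc : ℝ) < R + 1 := Nat.ceil_lt_add_one hR.le
  have step : ∀ i : ℕ, (if ((i + 1 : ℕ) : ℝ) < R then jap ((i + 1 : ℕ) : ℝ) ^ (-q) else 0)
      ≤ (if i = 0 then 1 else 0)
        + (if i ∈ Finset.Icc 1 Kc then ((i + 1 : ℕ) : ℝ) ^ (-q) else 0) := by
    intro i
    by_cases h1 : ((i + 1 : ℕ) : ℝ) < R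
    · rw [if_pos h1]
      by_cases h2 : i = 0
      · rw [if_pos h2, h2]
        have : jap ((0 + 1 : ℕ) : ℝ) ^ (-q) ≤ 1 := japr_le_one (le_of_lt hq0) _
        have h3 : (0 : ℝ) ≤ (if (0 : ℕ) ∈ Finset.Icc 1 Kc then ((0 + 1 : ℕ) : ℝ) ^ (-q) else 0) := by
          split
          · exact Real.rpow_nonneg (by positivity) _
          · exact le_refl _
        linarith
      · have hmem : i ∈ Finset.Icc 1 Kc := by
          rw [Finset.mem_Icc]
          constructor
          · omega
          · have : ((i + 1 : ℕ) : ℝ) < (Kc : ℝ) + 1 := lt_of_lt_of_le h1 (by linarith)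
            have : (i : ℝ) < (Kc : ℝ) := by push_cast at this ⊢; linarith
            exact_mod_cast this.le
        rw [if_neg h2, if_pos hmem, zero_add]
        refine (japr_le_abs (le_of_lt hq0) (by positivity)).trans ?_
        rw [abs_of_nonneg (Nat.cast_nonneg _)]
    · rw [if_neg h1]
      have h3 : (0 : ℝ) ≤ (if i = 0 then (1 : ℝ) else 0) := by split <;> norm_num
      have h4 : (0 : ℝ) ≤ (if i ∈ Finset.Icc 1 Kc then ((i + 1 : ℕ) : ℝ) ^ (-q) else 0) := by
        split
        · exact Real.rpow_nonneg (by positivity) _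
        · exact le_refl _
      linarith
  refine (Finset.sum_le_sum fun i _ => step i).trans ?_
  rw [Finset.sum_add_distrib]
  have hA : (∑ i ∈ Finset.range K, (if i = 0 then (1 : ℝ) else 0)) ≤ 1 := by
    rw [Finset.sum_ite_eq' (Finset.range K) 0 (fun _ => (1 : ℝ))]
    split <;> norm_num
  have hB : (∑ i ∈ Finset.range K, (if i ∈ Finset.Icc 1 Kc then ((i + 1 : ℕ) : ℝ) ^ (-q) else 0))
      ≤ (R + 2) ^ (1 - q) / (1 - q) := by
    rw [← Finset.sum_filter]
    have hsub : (Finset.range K).filter (fun i => i ∈ Finset.Icc 1 Kc) ⊆ Finset.Icc 1 Kc :=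
      fun i hi => (Finset.mem_filter.mp hi).2
    refine (Finset.sum_le_sum_of_subset_of_nonneg hsub
      (fun i _ _ => Real.rpow_nonneg (by positivity) _)).trans ?_
    rw [← Finset.Ico_add_one_right_eq_Icc, Finset.sum_Ico_eq_sum_range]
    have heq : (∑ i ∈ Finset.range (Kc + 1 - 1), ((1 + i + 1 : ℕ) : ℝ) ^ (-q))
        = ∑ i ∈ Finset.range Kc, (fun x : ℝ => x ^ (-q)) ((1 : ℝ) + ((i + 1 : ℕ) : ℝ)) := by
      rw [show Kc + 1 - 1 = Kc by omega]
      apply Finset.sum_congr rfl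
      intro i _
      dsimp only
      congr 1
      push_cast
      ring
    rw [heq]
    have hanti : AntitoneOn (fun x : ℝ => x ^ (-q)) (Icc (1 : ℝ) ((1 : ℝ) + Kc)) := by
      intro x hx y hy hxy
      exact Real.rpow_le_rpow_of_nonpos (lt_of_lt_of_le zero_lt_one hx.1) hxy (by linarith)
    refine hanti.sum_le_integral.trans ?_
    rw [intervalIntegral.integral_of_le (le_add_of_nonneg_right (Nat.cast_nonneg Kc)),
      ← intervalIntegral.integral_of_le (le_add_of_nonneg_right (Nat.cast_nonneg Kc)),
      _root_.integral_rpow (Or.inl (by linarith : (-1 : ℝ) < -q))]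
    have h1q : (0 : ℝ) < 1 - q := by linarith
    have hbase : ((1 : ℝ) + Kc) ^ (-q + 1) ≤ (R + 2) ^ (1 - q) := by
      rw [show -q + 1 = 1 - q by ring]
      exact Real.rpow_le_rpow (by positivity) (by linarith) h1q.le
    have hone : (1 : ℝ) ^ (-q + 1) = 1 := Real.one_rpow _
    rw [hone, show -q + 1 = 1 - q by ring]
    rw [div_le_div_iff₀ h1q h1q]
    have h2 : ((1 : ℝ) + Kc) ^ (1 - q) ≤ (R + 2) ^ (1 - q) := by
      rw [show (1 - q : ℝ) = -q + 1 by ring] at *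
      exact hbase
    nlinarith [Real.rpow_nonneg (show (0:ℝ) ≤ R + 2 by linarith) (1 - q)]
  linarith

lemma disc_head {q R : ℝ} (hq0 : 0 < q) (hq1 : q < 1) (hR : 0 < R) :
    Summable (fun m : ℤ => if |(m : ℝ)| < R then jap (m : ℝ) ^ (-q) else 0) ∧
    (∑' m : ℤ, (if |(m : ℝ)| < R then jap (m : ℝ) ^ (-q) else 0))
      ≤ 3 + (2 / (1 - q)) * (R + 2) ^ (1 - q) := by
  set F : ℤ → ℝ := fun m => if |(m : ℝ)| < R then jap (m : ℝ) ^ (-q) else 0 with hFdef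
  have hFnn : ∀ m : ℤ, 0 ≤ F m := by
    intro m; rw [hFdef]; dsimp only; split
    · exact japr_nonneg _ _
    · exact le_refl _
  set K : ℕ := ⌈R⌉₊ with hKdef
  have hKR : R ≤ (K : ℝ) := Nat.le_ceil R
  have hF : Summable F := by
    apply summable_of_ne_finset_zero (s := Finset.Icc (-(K : ℤ)) K)
    intro m hm
    rw [hFdef]; dsimp only
    rw [if_neg]
    rw [Finset.mem_Icc] at hm
    push_neg at hm
    intro habs
    have h1 : |m| ≤ (K : ℤ) := by
      have : |(m : ℝ)| < (K : ℝ) := lt_of_lt_of_le habs hKR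
      have h2 : ((|m| : ℤ) : ℝ) < (K : ℝ) := by rwa [show ((|m| : ℤ) : ℝ) = |(m : ℝ)| by push_cast; rfl]
      exact_mod_cast h2.le
    rw [abs_le] at h1
    omega
  refine ⟨hF, ?_⟩
  set w : ℕ → ℝ := fun n => if ((n : ℕ) : ℝ) < R then jap ((n : ℕ) : ℝ) ^ (-q) else 0 with hwdef
  have h₁ : ∀ n : ℕ, F (n : ℤ) = w n := by
    intro n; rw [hFdef, hwdef]; dsimp only
    rw [show ((n : ℤ) : ℝ) = (n : ℝ) by push_cast; ring, abs_of_nonneg (Nat.cast_nonneg n)]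
  have h₂ : ∀ n : ℕ, F (-(n + 1) : ℤ) = w (n + 1) := by
    intro n; rw [hFdef, hwdef]; dsimp only
    rw [show ((-(n + 1) : ℤ) : ℝ) = -((n + 1 : ℕ) : ℝ) by push_cast; ring, abs_neg, jap_neg,
      abs_of_nonneg (Nat.cast_nonneg (n + 1))]
  have hS1 : Summable fun n : ℕ => F (n : ℤ) := hF.comp_injective (fun a b h => by omega)
  have hS2 : Summable fun n : ℕ => F (-(n + 1) : ℤ) := hF.comp_injective (fun a b h => by omega)
  have hw : Summable w := hS1.congr h₁
  have hdec := tsum_of_nat_of_neg_add_one hS1 hS2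
  rw [tsum_congr h₁, tsum_congr h₂] at hdec
  have hzero : (∑' n : ℕ, w n) = w 0 + ∑' n : ℕ, w (n + 1) := Summable.tsum_eq_zero_add hw
  have hw0 : w 0 ≤ 1 := by
    rw [hwdef]; dsimp only; split
    · exact japr_le_one hq0.le _
    · norm_num
  have htail : (∑' n : ℕ, w (n + 1)) ≤ 1 + (R + 2) ^ (1 - q) / (1 - q) := by
    apply Real.tsum_le_of_sum_range_le (fun n => by
      rw [hwdef]; dsimp only; split
      · exact japr_nonneg _ _
      · exact le_refl _)
    intro K'
    exact nat_head_partial hq0 hq1 hR K'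
  calc (∑' m : ℤ, F m) = (∑' n : ℕ, w n) + ∑' n : ℕ, w (n + 1) := hdec
    _ = w 0 + 2 * ∑' n : ℕ, w (n + 1) := by rw [hzero]; ring
    _ ≤ 1 + 2 * (1 + (R + 2) ^ (1 - q) / (1 - q)) := by linarith
    _ = 3 + (2 / (1 - q)) * (R + 2) ^ (1 - q) := by ring

lemma disc_part {s c : ℝ} (hs₁ : 1 / 4 < s) (hs₂ : s < 1 / 2) (hc : 0 < c)
    {N : ℝ} (hN : 1 ≤ N) (ξ : ℤ) :
    (∑' ξ₁ : {m : ℤ | c * N ≤ max |(m : ℝ)| |(ξ : ℝ) - (m : ℝ)|},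
        jap ((ξ₁ : ℤ) : ℝ) ^ (-(2 * s)) * jap ((ξ : ℝ) - ((ξ₁ : ℤ) : ℝ)) ^ (-(2 * s)))
      ≤ (4 * (1 + 1 / (4 * s - 1)) * c ^ (1 - 4 * s) + 6 * c ^ (-(2 * s))
          + (4 / (1 - 2 * s)) * c ^ (-(2 * s)) * (c + 2) ^ (1 - 2 * s)) * N ^ (1 - 4 * s) := by
  have hs4 : 1 < 4 * s := by linarith
  have hs2 : 2 * s < 1 := by linarith
  have hs2p : 0 < 2 * s := by linarith
  have hN0 : 0 < N := lt_of_lt_of_le zero_lt_one hN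
  set R := c * N with hRdef
  have hR : 0 < R := mul_pos hc hN0
  obtain ⟨hT, hTsum⟩ := disc_tail (q := 4 * s) hs4 hR
  obtain ⟨hH, hHsum⟩ := disc_head (q := 2 * s) hs2p hs2 hR
  set D1 : ℤ → ℝ := fun m => if R ≤ |(m : ℝ)| then jap (m : ℝ) ^ (-(4 * s)) else 0 with hD1def
  set D3 : ℤ → ℝ := fun m =>
    R ^ (-(2 * s)) * (if |(m : ℝ)| < R then jap (m : ℝ) ^ (-(2 * s)) else 0) with hD3def
  have hD3 : Summable D3 := hH.mul_left _
  have hcast : ∀ m : ℤ, ((ξ - m : ℤ) : ℝ) = (ξ : ℝ) - (m : ℝ) := by intro m; push_cast; ring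
  have hD2 : Summable (fun m : ℤ => D1 (ξ - m)) := ((Equiv.subLeft ξ).summable_iff).mpr hT
  have hD4 : Summable (fun m : ℤ => D3 (ξ - m)) := ((Equiv.subLeft ξ).summable_iff).mpr hD3
  have hD1nn : ∀ m : ℤ, 0 ≤ D1 m := by
    intro m; rw [hD1def]; dsimp only; split
    · exact japr_nonneg _ _
    · exact le_refl _
  have hD3nn : ∀ m : ℤ, 0 ≤ D3 m := by
    intro m; rw [hD3def]; dsimp only
    refine mul_nonneg (Real.rpow_nonneg hR.le _) ?_
    split
    · exact japr_nonneg _ _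
    · exact le_refl _
  set fv : ℤ → ℝ := fun m => jap (m : ℝ) ^ (-(2 * s)) * jap ((ξ : ℝ) - (m : ℝ)) ^ (-(2 * s))
    with hfvdef
  have hfnn : ∀ m : ℤ, 0 ≤ fv m := fun m => mul_nonneg (japr_nonneg _ _) (japr_nonneg _ _)
  set g : ℤ → ℝ := fun m => D1 m + D1 (ξ - m) + D3 m + D3 (ξ - m) with hgdef
  have hg : Summable g := ((hT.add hD2).add hD3).add hD4
  have hgnn : ∀ m : ℤ, 0 ≤ g m := fun m => by
    have := hD1nn m; have := hD1nn (ξ - m); have := hD3nn m; have := hD3nn (ξ - m)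
    rw [hgdef]; dsimp only; linarith
  -- the key pointwise estimate
  have key : ∀ m : ℤ, c * N ≤ max |(m : ℝ)| |(ξ : ℝ) - (m : ℝ)| → fv m ≤ g m := by
    intro m hm
    have hD1m : jap (m : ℝ) ^ (-(4 * s)) ≤ D1 m + 0 ∨ True := Or.inr trivial
    rw [hgdef]; dsimp only
    have h2a := hD1nn m; have h2b := hD1nn (ξ - m); have h2c := hD3nn m
    have h2d := hD3nn (ξ - m)
    rcases le_total |(m : ℝ)| |(ξ : ℝ) - (m : ℝ)| with hle | hle
    · have hR2 : R ≤ |(ξ : ℝ) - (m : ℝ)| := hm.trans_eq (max_eq_right hle)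
      by_cases hcase : R ≤ |(m : ℝ)|
      · have h1 : fv m ≤ D1 m := by
          rw [hfvdef, hD1def]; dsimp only
          rw [if_pos hcase]
          have hx2 : jap ((ξ : ℝ) - (m : ℝ)) ^ (-(2 * s)) ≤ jap (m : ℝ) ^ (-(2 * s)) :=
            japr_anti (by linarith) hle
          calc jap (m : ℝ) ^ (-(2 * s)) * jap ((ξ : ℝ) - (m : ℝ)) ^ (-(2 * s))
              ≤ jap (m : ℝ) ^ (-(2 * s)) * jap (m : ℝ) ^ (-(2 * s)) :=
                mul_le_mul_of_nonneg_left hx2 (japr_nonneg _ _)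
            _ = jap (m : ℝ) ^ (-(4 * s)) := by
                rw [← Real.rpow_add (jap_pos _)]; congr 1; ring
        linarith
      · push_neg at hcase
        have h1 : fv m ≤ D3 m := by
          rw [hfvdef, hD3def]; dsimp only
          rw [if_pos hcase]
          have hx2 : jap ((ξ : ℝ) - (m : ℝ)) ^ (-(2 * s)) ≤ R ^ (-(2 * s)) :=
            japr_le_const (by linarith) hR hR2
          calc jap (m : ℝ) ^ (-(2 * s)) * jap ((ξ : ℝ) - (m : ℝ)) ^ (-(2 * s))
              ≤ jap (m : ℝ) ^ (-(2 * s)) * R ^ (-(2 * s)) :=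
                mul_le_mul_of_nonneg_left hx2 (japr_nonneg _ _)
            _ = R ^ (-(2 * s)) * jap (m : ℝ) ^ (-(2 * s)) := mul_comm _ _
        linarith
    · have hR2 : R ≤ |(m : ℝ)| := hm.trans_eq (max_eq_left hle)
      by_cases hcase : R ≤ |(ξ : ℝ) - (m : ℝ)|
      · have h1 : fv m ≤ D1 (ξ - m) := by
          rw [hfvdef, hD1def]; dsimp only
          rw [hcast m, if_pos hcase]
          have hx2 : jap (m : ℝ) ^ (-(2 * s)) ≤ jap ((ξ : ℝ) - (m : ℝ)) ^ (-(2 * s)) :=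
            japr_anti (by linarith) hle
          calc jap (m : ℝ) ^ (-(2 * s)) * jap ((ξ : ℝ) - (m : ℝ)) ^ (-(2 * s))
              ≤ jap ((ξ : ℝ) - (m : ℝ)) ^ (-(2 * s)) * jap ((ξ : ℝ) - (m : ℝ)) ^ (-(2 * s)) :=
                mul_le_mul_of_nonneg_right hx2 (japr_nonneg _ _)
            _ = jap ((ξ : ℝ) - (m : ℝ)) ^ (-(4 * s)) := by
                rw [← Real.rpow_add (jap_pos _)]; congr 1; ring
        linarith
      · push_neg at hcase
        have h1 : fv m ≤ D3 (ξ - m) := by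
          rw [hfvdef, hD3def]; dsimp only
          rw [hcast m, if_pos hcase]
          have hx2 : jap (m : ℝ) ^ (-(2 * s)) ≤ R ^ (-(2 * s)) :=
            japr_le_const (by linarith) hR hR2
          exact mul_le_mul_of_nonneg_right hx2 (japr_nonneg _ _)
        linarith
  set S : Set ℤ := {m : ℤ | c * N ≤ max |(m : ℝ)| |(ξ : ℝ) - (m : ℝ)|} with hSdef
  have hgS : Summable (fun x : S => g x) := hg.subtype S
  have hfS : Summable (fun x : S => fv x) :=
    Summable.of_nonneg_of_le (fun x => hfnn x) (fun x => key x x.2) hgS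
  have step1 : (∑' x : S, fv x) ≤ ∑' x : S, g x :=
    Summable.tsum_le_tsum (fun x => key x x.2) hfS hgS
  have step2 : (∑' x : S, g x) ≤ ∑' m : ℤ, g m := by
    rw [tsum_subtype S g]
    exact Summable.tsum_le_tsum (fun m => Set.indicator_le_self' (fun m _ => hgnn m) m)
      (hg.indicator S) hg
  have step3 : (∑' m : ℤ, g m) = (∑' m, D1 m) + (∑' m, D1 (ξ - m)) + (∑' m, D3 m)
      + (∑' m, D3 (ξ - m)) := by
    have hA1 : Summable (fun m : ℤ => D1 m + D1 (ξ - m)) := by exact hT.add hD2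
    have hA2 : Summable (fun m : ℤ => D1 m + D1 (ξ - m) + D3 m) := by exact hA1.add hD3
    calc (∑' m : ℤ, g m)
        = (∑' m : ℤ, (D1 m + D1 (ξ - m) + D3 m)) + ∑' m, D3 (ξ - m) := Summable.tsum_add hA2 hD4
      _ = ((∑' m : ℤ, (D1 m + D1 (ξ - m))) + ∑' m, D3 m) + ∑' m, D3 (ξ - m) :=
          congrArg (fun t => t + ∑' m, D3 (ξ - m)) (Summable.tsum_add hA1 hD3)
      _ = (((∑' m, D1 m) + ∑' m, D1 (ξ - m)) + ∑' m, D3 m) + ∑' m, D3 (ξ - m) :=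
          congrArg (fun t => t + (∑' m, D3 m) + ∑' m, D3 (ξ - m)) (Summable.tsum_add hT hD2)
  have hD2sum : (∑' m : ℤ, D1 (ξ - m)) = ∑' m : ℤ, D1 m := (Equiv.subLeft ξ).tsum_eq D1
  have hD4sum : (∑' m : ℤ, D3 (ξ - m)) = ∑' m : ℤ, D3 m := (Equiv.subLeft ξ).tsum_eq D3
  have hD3sum : (∑' m : ℤ, D3 m)
      = R ^ (-(2 * s)) * ∑' m : ℤ, (if |(m : ℝ)| < R then jap (m : ℝ) ^ (-(2 * s)) else 0) :=
    tsum_mul_left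
  -- numerics
  have hcc : R ^ (1 - 4 * s) = c ^ (1 - 4 * s) * N ^ (1 - 4 * s) := Real.mul_rpow hc.le hN0.le
  have hc2 : R ^ (-(2 * s)) = c ^ (-(2 * s)) * N ^ (-(2 * s)) := Real.mul_rpow hc.le hN0.le
  have hNle : N ^ (-(2 * s)) ≤ N ^ (1 - 4 * s) :=
    Real.rpow_le_rpow_of_exponent_le hN (by linarith)
  have hNN : N ^ (-(2 * s)) * N ^ (1 - 2 * s) = N ^ (1 - 4 * s) := by
    rw [← Real.rpow_add hN0]; congr 1; ring
  have hr2 : (R + 2) ^ (1 - 2 * s) ≤ (c + 2) ^ (1 - 2 * s) * N ^ (1 - 2 * s) := by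
    rw [← Real.mul_rpow (by linarith) hN0.le]
    apply Real.rpow_le_rpow (by linarith) ?_ (by linarith)
    rw [hRdef]; nlinarith
  have hcpos : 0 < c ^ (-(2 * s)) := Real.rpow_pos_of_pos hc _
  have hc4pos : 0 < c ^ (1 - 4 * s) := Real.rpow_pos_of_pos hc _
  have hcp2pos : 0 < (c + 2) ^ (1 - 2 * s) := Real.rpow_pos_of_pos (by linarith) _
  have hNpos : 0 < N ^ (1 - 4 * s) := Real.rpow_pos_of_pos hN0 _
  have hN12pos : 0 < N ^ (1 - 2 * s) := Real.rpow_pos_of_pos hN0 _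
  have hN2pos : 0 < N ^ (-(2 * s)) := Real.rpow_pos_of_pos hN0 _
  -- head sum bound with cN-terms
  have hheadfinal : (∑' m : ℤ, D3 m)
      ≤ 3 * (c ^ (-(2 * s)) * N ^ (-(2 * s)))
        + (2 / (1 - 2 * s)) * (c ^ (-(2 * s)) * N ^ (-(2 * s)))
          * ((c + 2) ^ (1 - 2 * s) * N ^ (1 - 2 * s)) := by
    rw [hD3sum]
    have hRpow : 0 < R ^ (-(2 * s)) := Real.rpow_pos_of_pos hR _
    have h1 : R ^ (-(2 * s))
        * (∑' m : ℤ, (if |(m : ℝ)| < R then jap (m : ℝ) ^ (-(2 * s)) else 0))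
        ≤ R ^ (-(2 * s)) * (3 + (2 / (1 - 2 * s)) * (R + 2) ^ (1 - 2 * s)) :=
      mul_le_mul_of_nonneg_left hHsum hRpow.le
    refine h1.trans ?_
    have h2 : R ^ (-(2 * s)) * ((2 / (1 - 2 * s)) * (R + 2) ^ (1 - 2 * s))
        ≤ R ^ (-(2 * s)) * ((2 / (1 - 2 * s)) * ((c + 2) ^ (1 - 2 * s) * N ^ (1 - 2 * s))) := by
      apply mul_le_mul_of_nonneg_left ?_ hRpow.le
      apply mul_le_mul_of_nonneg_left hr2 (div_nonneg (by norm_num) (by linarith))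
    calc R ^ (-(2 * s)) * (3 + (2 / (1 - 2 * s)) * (R + 2) ^ (1 - 2 * s))
        = R ^ (-(2 * s)) * 3 + R ^ (-(2 * s)) * ((2 / (1 - 2 * s)) * (R + 2) ^ (1 - 2 * s)) := by
          ring
      _ ≤ R ^ (-(2 * s)) * 3
          + R ^ (-(2 * s)) * ((2 / (1 - 2 * s)) * ((c + 2) ^ (1 - 2 * s) * N ^ (1 - 2 * s))) := by
          linarith
      _ = 3 * (c ^ (-(2 * s)) * N ^ (-(2 * s)))
          + (2 / (1 - 2 * s)) * (c ^ (-(2 * s)) * N ^ (-(2 * s)))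
            * ((c + 2) ^ (1 - 2 * s) * N ^ (1 - 2 * s)) := by rw [hc2]; ring
  have htailfinal : (∑' m : ℤ, D1 m)
      ≤ (2 * (1 + 1 / (4 * s - 1))) * (c ^ (1 - 4 * s) * N ^ (1 - 4 * s)) := by
    rw [← hcc]; exact hTsum
  -- put everything together
  refine (step1.trans (step2.trans_eq step3)).trans ?_
  rw [hD2sum, hD4sum]
  have hq1 : 0 < 4 * s - 1 := by linarith
  have hq2 : 0 < 1 - 2 * s := by linarith
  set A := 4 * (1 + 1 / (4 * s - 1)) * c ^ (1 - 4 * s) with hAdef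
  set B := 6 * c ^ (-(2 * s)) with hBdef
  set Cc := (4 / (1 - 2 * s)) * c ^ (-(2 * s)) * (c + 2) ^ (1 - 2 * s) with hCdef
  have hBpos : 0 ≤ B := by rw [hBdef]; positivity
  have hfin : 2 * ((2 * (1 + 1 / (4 * s - 1))) * (c ^ (1 - 4 * s) * N ^ (1 - 4 * s)))
      + 2 * (3 * (c ^ (-(2 * s)) * N ^ (-(2 * s)))
        + (2 / (1 - 2 * s)) * (c ^ (-(2 * s)) * N ^ (-(2 * s)))
          * ((c + 2) ^ (1 - 2 * s) * N ^ (1 - 2 * s)))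
      ≤ (A + B + Cc) * N ^ (1 - 4 * s) := by
    have t2le : B * N ^ (-(2 * s)) ≤ B * N ^ (1 - 4 * s) :=
      mul_le_mul_of_nonneg_left hNle hBpos
    calc 2 * ((2 * (1 + 1 / (4 * s - 1))) * (c ^ (1 - 4 * s) * N ^ (1 - 4 * s)))
        + 2 * (3 * (c ^ (-(2 * s)) * N ^ (-(2 * s)))
          + (2 / (1 - 2 * s)) * (c ^ (-(2 * s)) * N ^ (-(2 * s)))
            * ((c + 2) ^ (1 - 2 * s) * N ^ (1 - 2 * s)))
        = A * N ^ (1 - 4 * s) + B * N ^ (-(2 * s))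
          + Cc * (N ^ (-(2 * s)) * N ^ (1 - 2 * s)) := by
          rw [hAdef, hBdef, hCdef]; ring
      _ = A * N ^ (1 - 4 * s) + B * N ^ (-(2 * s)) + Cc * N ^ (1 - 4 * s) := by rw [hNN]
      _ ≤ A * N ^ (1 - 4 * s) + B * N ^ (1 - 4 * s) + Cc * N ^ (1 - 4 * s) := by linarith
      _ = (A + B + Cc) * N ^ (1 - 4 * s) := by ring
  have hmono : (∑' m, D1 m) + (∑' m, D1 m) + (∑' m, D3 m) + (∑' m, D3 m)
      ≤ 2 * ((2 * (1 + 1 / (4 * s - 1))) * (c ^ (1 - 4 * s) * N ^ (1 - 4 * s)))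
      + 2 * (3 * (c ^ (-(2 * s)) * N ^ (-(2 * s)))
        + (2 / (1 - 2 * s)) * (c ^ (-(2 * s)) * N ^ (-(2 * s)))
          * ((c + 2) ^ (1 - 2 * s) * N ^ (1 - 2 * s))) := by linarith
  linarith

/-- Convolution kernel estimate.  Let `1/4 < s < 1/2` and `c > 0`. There exists
`C = C(s,c)` such that for every `N ≥ 1`,
`sup_ξ ∫_{max(|ξ₁|,|ξ-ξ₁|) ≥ cN} ⟨ξ₁⟩^{-2s} ⟨ξ-ξ₁⟩^{-2s} dξ₁ ≤ C N^{1-4s}`,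
and the analogous bound with the integral replaced by a sum over `ξ₁ ∈ ℤ`. -/
theorem convolution_kernel_estimate (s c : ℝ) (hs₁ : 1 / 4 < s) (hs₂ : s < 1 / 2) (hc : 0 < c) :
    ∃ C : ℝ, 0 < C ∧ ∀ N : ℝ, 1 ≤ N →
      (∀ ξ : ℝ,
        (∫ ξ₁ in {ξ₁ : ℝ | c * N ≤ max |ξ₁| |ξ - ξ₁|},
          jap ξ₁ ^ (-(2 * s)) * jap (ξ - ξ₁) ^ (-(2 * s))) ≤ C * N ^ (1 - 4 * s)) ∧
      (∀ ξ : ℤ,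
        (∑' ξ₁ : {m : ℤ | c * N ≤ max |(m : ℝ)| |(ξ : ℝ) - (m : ℝ)|},
          jap ((ξ₁ : ℤ) : ℝ) ^ (-(2 * s)) * jap ((ξ : ℝ) - ((ξ₁ : ℤ) : ℝ)) ^ (-(2 * s)))
          ≤ C * N ^ (1 - 4 * s)) := by
  have h4 : 0 < 4 * s - 1 := by linarith
  have h2 : 0 < 1 - 2 * s := by linarith
  have hc4 : 0 < c ^ (1 - 4 * s) := Real.rpow_pos_of_pos hc _
  have hc2 : 0 < c ^ (-(2 * s)) := Real.rpow_pos_of_pos hc _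
  have hcp2 : 0 < (c + 2) ^ (1 - 2 * s) := Real.rpow_pos_of_pos (by linarith) _
  set Ccont := (4 / (4 * s - 1) + 4 / (1 - 2 * s)) * c ^ (1 - 4 * s) with hCcontdef
  set Cdisc := 4 * (1 + 1 / (4 * s - 1)) * c ^ (1 - 4 * s) + 6 * c ^ (-(2 * s))
      + (4 / (1 - 2 * s)) * c ^ (-(2 * s)) * (c + 2) ^ (1 - 2 * s) with hCdiscdef
  have hCcont : 0 < Ccont :=
    mul_pos (add_pos (div_pos four_pos h4) (div_pos four_pos h2)) hc4
  have hCdisc : 0 < Cdisc := by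
    have h1 : 0 < 4 * (1 + 1 / (4 * s - 1)) := by
      have : 0 < 1 / (4 * s - 1) := div_pos one_pos h4
      linarith
    have h3 : 0 < 4 / (1 - 2 * s) := div_pos four_pos h2
    have := mul_pos (mul_pos h3 hc2) hcp2
    have := mul_pos h1 hc4
    rw [hCdiscdef]
    nlinarith
  refine ⟨Ccont + Cdisc, by linarith, fun N hN => ⟨fun ξ => ?_, fun ξ => ?_⟩⟩
  · have hNpos : 0 < N ^ (1 - 4 * s) :=
      Real.rpow_pos_of_pos (lt_of_lt_of_le zero_lt_one hN) _
    have := cont_part hs₁ hs₂ hc hN ξ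
    have hd : 0 ≤ Cdisc * N ^ (1 - 4 * s) := le_of_lt (mul_pos hCdisc hNpos)
    calc _ ≤ Ccont * N ^ (1 - 4 * s) := this
      _ ≤ (Ccont + Cdisc) * N ^ (1 - 4 * s) := by nlinarith
  · have hNpos : 0 < N ^ (1 - 4 * s) :=
      Real.rpow_pos_of_pos (lt_of_lt_of_le zero_lt_one hN) _
    have := disc_part hs₁ hs₂ hc hN ξ
    have hd : 0 ≤ Ccont * N ^ (1 - 4 * s) := le_of_lt (mul_pos hCcont hNpos)
    calc _ ≤ Cdisc * N ^ (1 - 4 * s) := this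
      _ ≤ (Ccont + Cdisc) * N ^ (1 - 4 * s) := by nlinarith
end
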